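/- arXiv:1110.6636 — 2 statements merged into one kernel-verified Lean document; each statement's English description precedes it below -/
import Mathlib

section
/- Let ν₀ := ν − E[ν] be a centered random variable with μ₂ := E[ν₀²] and μ₃ := E|ν₀|³ finite. Then its characteristic function satisfies |φ_{ν₀}(t)| ≤ exp(−½ μ₂ t² + ⅓ μ₃ |t|³) for all t ∈ ℝ. -/
open MeasureTheory Complex
open scoped ENNReal NNReal


lemma hasDerivAt_expI (s : ℝ) :
    HasDerivAt (fun r : ℝ => Complex.exp (r * I)) (Complex.exp (s * I) * I) s := by
  have h : HasDerivAt (fun z : ℂ => Complex.exp (z * I)) (Complex.exp ((s : ℂ) * I) * I) (s : ℂ) := by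
    simpa using ((hasDerivAt_id ((s : ℂ))).mul_const I).cexp
  exact h.comp_ofReal

lemma hasDerivAt_linI (s : ℝ) : HasDerivAt (fun r : ℝ => (r : ℂ) * I) I s := by
  have h : HasDerivAt (fun z : ℂ => z * I) I (s : ℂ) := by
    simpa using (hasDerivAt_id ((s : ℂ))).mul_const I
  exact h.comp_ofReal

lemma hasDerivAt_sq2 (s : ℝ) : HasDerivAt (fun r : ℝ => ((r : ℂ) ^ 2 / 2)) (s : ℂ) s := by
  have h : HasDerivAt (fun z : ℂ => z ^ 2 / 2) (s : ℂ) (s : ℂ) := by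
    simpa using (hasDerivAt_pow 2 ((s : ℂ))).div_const 2
  exact h.comp_ofReal

lemma taylor0 (x : ℝ) (hx : 0 ≤ x) : ‖Complex.exp (x * I) - 1‖ ≤ x := by
  have key : Complex.exp (x * I) - 1 = ∫ s in (0:ℝ)..x, Complex.exp (s * I) * I := by
    rw [intervalIntegral.integral_eq_sub_of_hasDerivAt (fun s _ => hasDerivAt_expI s)
      ((Continuous.intervalIntegrable (by continuity) _ _))]
    simp
  rw [key]
  calc ‖∫ s in (0:ℝ)..x, Complex.exp (s * I) * I‖ ≤ 1 * |x - 0| :=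
        intervalIntegral.norm_integral_le_of_norm_le_const
          (fun s _ => by simp [Complex.norm_exp_ofReal_mul_I])
    _ = x := by rw [sub_zero, _root_.abs_of_nonneg hx, one_mul]

lemma taylor1 (x : ℝ) (hx : 0 ≤ x) : ‖Complex.exp (x * I) - 1 - x * I‖ ≤ x ^ 2 / 2 := by
  have key : Complex.exp (x * I) - 1 - x * I
      = ∫ s in (0:ℝ)..x, (Complex.exp (s * I) - 1) * I := by
    rw [intervalIntegral.integral_eq_sub_of_hasDerivAt
      (f := fun s : ℝ => Complex.exp (s * I) - 1 - s * I)
      (fun s _ => (show HasDerivAt (fun s : ℝ => Complex.exp (s * I) - 1 - s * I) _ s from ((hasDerivAt_expI s).sub_const 1).sub (hasDerivAt_linI s)).congr_deriv (by ring))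
      ((Continuous.intervalIntegrable (by continuity) _ _))]
    simp
  rw [key]
  have hb : ‖∫ s in (0:ℝ)..x, (Complex.exp (s * I) - 1) * I‖ ≤ |∫ s in (0:ℝ)..x, s| := by
    apply intervalIntegral.norm_integral_le_abs_of_norm_le
    · filter_upwards [ae_restrict_mem measurableSet_uIoc] with s hs
      rw [Set.uIoc_of_le hx] at hs
      simpa using taylor0 s hs.1.le
    · exact Continuous.intervalIntegrable (by continuity) _ _
  refine hb.trans ?_
  rw [integral_id, _root_.abs_of_nonneg (by nlinarith [sq_nonneg x])]
  norm_num

lemma taylor2 (x : ℝ) (hx : 0 ≤ x) :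
    ‖Complex.exp (x * I) - 1 - x * I + x ^ 2 / 2‖ ≤ x ^ 3 / 6 := by
  have key : Complex.exp (x * I) - 1 - x * I + (x:ℂ) ^ 2 / 2
      = ∫ s in (0:ℝ)..x, (Complex.exp (s * I) - 1 - s * I) * I := by
    rw [intervalIntegral.integral_eq_sub_of_hasDerivAt
      (f := fun s : ℝ => Complex.exp (s * I) - 1 - s * I + (s:ℂ) ^ 2 / 2)
      (fun s _ => ?_) ((Continuous.intervalIntegrable (by continuity) _ _))]
    · simp
    · have h := (((hasDerivAt_expI s).sub_const 1).sub (hasDerivAt_linI s)).add (hasDerivAt_sq2 s)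
      convert h using 1
      · rfl
      · linear_combination (-(s : ℂ)) * Complex.I_sq
  rw [key]
  have hb : ‖∫ s in (0:ℝ)..x, (Complex.exp (s * I) - 1 - s * I) * I‖
      ≤ |∫ s in (0:ℝ)..x, s ^ 2 / 2| := by
    apply intervalIntegral.norm_integral_le_abs_of_norm_le
    · filter_upwards [ae_restrict_mem measurableSet_uIoc] with s hs
      rw [Set.uIoc_of_le hx] at hs
      simpa using taylor1 s hs.1.le
    · exact Continuous.intervalIntegrable (by continuity) _ _
  refine hb.trans ?_
  rw [intervalIntegral.integral_div, integral_pow,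
    _root_.abs_of_nonneg (by nlinarith [pow_nonneg hx 3])]
  norm_num
  linarith

lemma taylor (x : ℝ) : ‖Complex.exp (x * I) - 1 - x * I + (x:ℂ) ^ 2 / 2‖ ≤ |x| ^ 3 / 6 := by
  rcases le_or_gt 0 x with hx | hx
  · rw [_root_.abs_of_nonneg hx]; exact taylor2 x hx
  · have hy : 0 ≤ -x := by linarith
    have hc : (starRingEnd ℂ) (Complex.exp ((-x : ℝ) * I) - 1 - ((-x : ℝ) : ℂ) * I
          + ((-x : ℝ) : ℂ) ^ 2 / 2)
        = Complex.exp (x * I) - 1 - x * I + (x:ℂ) ^ 2 / 2 := by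
      rw [map_add, map_sub, map_sub, map_div₀, map_mul, map_pow, ← Complex.exp_conj, map_mul]
      simp [Complex.conj_I, Complex.conj_ofReal, map_ofNat]
    rw [← hc, RCLike.norm_conj, _root_.abs_of_nonpos hx.le]
    exact taylor2 (-x) hy

lemma lyap {Ω : Type*} [MeasurableSpace Ω] (P : Measure Ω) [IsProbabilityMeasure P]
    (X : Ω → ℝ) (hm : AEStronglyMeasurable X P)
    (h3 : Integrable (fun ω => |X ω| ^ 3) P) :
    (∫ ω, X ω ^ 2 ∂P) ^ 3 ≤ (∫ ω, |X ω| ^ 3 ∂P) ^ 2 := by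
  have hmem3 : MemLp X 3 P := by
    rw [← memLp_norm_rpow_iff (q := 3) hm (by norm_num) (by norm_num)]
    rw [ENNReal.div_self (by norm_num) (by norm_num), memLp_one_iff_integrable]
    have he : (fun x => ‖X x‖ ^ (3 : ℝ≥0∞).toReal) = fun ω => |X ω| ^ 3 := by
      funext ω
      rw [Real.norm_eq_abs, show ((3:ℝ≥0∞).toReal) = ((3:ℕ):ℝ) by norm_num,
        Real.rpow_natCast]
    rw [he]; exact h3
  have hmem2 : MemLp (fun ω => X ω ^ 2) (ENNReal.ofReal (3/2)) P := by
    have h := hmem3.norm_rpow_div 2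
    have he : (fun x => ‖X x‖ ^ (2 : ℝ≥0∞).toReal) = fun ω => X ω ^ 2 := by
      funext ω
      rw [Real.norm_eq_abs, show ((2:ℝ≥0∞).toReal) = ((2:ℕ):ℝ) by norm_num,
        Real.rpow_natCast, _root_.sq_abs]
    rw [he] at h
    convert h using 2
    rw [ENNReal.ofReal_div_of_pos (by norm_num)]
    norm_num
  have hmem1 : MemLp (fun _ : Ω => (1:ℝ)) (ENNReal.ofReal 3) P := memLp_const 1
  have hh := integral_mul_le_Lp_mul_Lq_of_nonneg (μ := P)
    ((Real.holderConjugate_iff (p := 3/2) (q := 3)).mpr ⟨by norm_num, by norm_num⟩)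
    (Filter.Eventually.of_forall fun ω => sq_nonneg (X ω))
    (Filter.Eventually.of_forall fun _ => zero_le_one) hmem2 hmem1
  simp only [mul_one] at hh
  have hA : (0:ℝ) ≤ ∫ ω, X ω ^ 2 ∂P := integral_nonneg fun ω => sq_nonneg _
  have hB : (0:ℝ) ≤ ∫ ω, |X ω| ^ 3 ∂P := integral_nonneg fun ω => by positivity
  have he1 : (fun ω => (X ω ^ 2) ^ ((3:ℝ)/2)) = fun ω => |X ω| ^ 3 := by
    funext ω
    rw [← _root_.sq_abs, ← Real.rpow_natCast |X ω| 2, ← Real.rpow_mul (abs_nonneg _),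
      ← Real.rpow_natCast |X ω| 3]
    norm_num
  rw [he1] at hh
  have he2 : ∫ _ : Ω, (1:ℝ) ^ (3:ℝ) ∂P = 1 := by simp
  rw [he2] at hh
  have hh2 : (∫ ω, X ω ^ 2 ∂P) ≤ (∫ ω, |X ω| ^ 3 ∂P) ^ ((2:ℝ)/3) := by
    calc (∫ ω, X ω ^ 2 ∂P) ≤ (∫ ω, |X ω| ^ 3 ∂P) ^ (1/((3:ℝ)/2)) * 1 ^ ((1:ℝ)/3) := hh
      _ = (∫ ω, |X ω| ^ 3 ∂P) ^ ((2:ℝ)/3) := by norm_num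
  calc (∫ ω, X ω ^ 2 ∂P) ^ 3 ≤ ((∫ ω, |X ω| ^ 3 ∂P) ^ ((2:ℝ)/3)) ^ 3 :=
        pow_le_pow_left₀ hA hh2 3
    _ = (∫ ω, |X ω| ^ 3 ∂P) ^ 2 := by
        rw [← Real.rpow_natCast ((∫ ω, |X ω| ^ 3 ∂P) ^ ((2:ℝ)/3)) 3,
          ← Real.rpow_mul hB, ← Real.rpow_natCast (∫ ω, |X ω| ^ 3 ∂P) 2]
        norm_num

lemma main_aux {Ω : Type*} [MeasurableSpace Ω] (P : Measure Ω) [IsProbabilityMeasure P]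
    (X : Ω → ℝ) (hXmeas : Measurable X) (hX1 : Integrable X P)
    (hX2 : Integrable (fun ω => X ω ^ 2) P) (hX3 : Integrable (fun ω => |X ω| ^ 3) P)
    (hX0 : ∫ ω, X ω ∂P = 0) (t : ℝ) :
    ‖∫ ω, Complex.exp ((t * X ω : ℝ) * I) ∂P‖
      ≤ Real.exp (-(1/2) * (∫ ω, X ω ^ 2 ∂P) * t ^ 2
          + (1/3) * (∫ ω, |X ω| ^ 3 ∂P) * |t| ^ 3) := by
  set μ2 := ∫ ω, X ω ^ 2 ∂P with hμ2
  set μ3 := ∫ ω, |X ω| ^ 3 ∂P with hμ3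
  have hμ2_0 : 0 ≤ μ2 := integral_nonneg fun ω => sq_nonneg _
  have hμ3_0 : 0 ≤ μ3 := integral_nonneg fun ω => by positivity
  set y : Ω → ℝ := fun ω => t * X ω with hy
  have hymeas : Measurable y := measurable_const.mul hXmeas
  have hyint : Integrable y P := hX1.const_mul t
  have hy2int : Integrable (fun ω => y ω ^ 2) P := by
    have : (fun ω => y ω ^ 2) = fun ω => t ^ 2 * X ω ^ 2 := by funext ω; simp [hy]; ring
    rw [this]; exact hX2.const_mul _
  have hy3int : Integrable (fun ω => |y ω| ^ 3) P := by
    have : (fun ω => |y ω| ^ 3) = fun ω => |t| ^ 3 * |X ω| ^ 3 := by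
      funext ω; simp [hy, abs_mul]; ring
    rw [this]; exact hX3.const_mul _
  have hy0 : ∫ ω, y ω ∂P = 0 := by
    simp only [hy]; rw [integral_const_mul, hX0, mul_zero]
  have hy2 : ∫ ω, y ω ^ 2 ∂P = t ^ 2 * μ2 := by
    have : (fun ω => y ω ^ 2) = fun ω => t ^ 2 * X ω ^ 2 := by funext ω; simp [hy]; ring
    rw [this, integral_const_mul]
  have hy3 : ∫ ω, |y ω| ^ 3 ∂P = |t| ^ 3 * μ3 := by
    have : (fun ω => |y ω| ^ 3) = fun ω => |t| ^ 3 * |X ω| ^ 3 := by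
      funext ω; simp [hy, abs_mul]; ring
    rw [this, integral_const_mul]
  set f : Ω → ℂ := fun ω => Complex.exp ((y ω : ℝ) * I) with hf
  have hfm : AEStronglyMeasurable f P :=
    (Complex.measurable_exp.comp
      ((Complex.measurable_ofReal.comp hymeas).mul_const I)).aestronglyMeasurable
  have hfnorm : ∀ ω, ‖f ω‖ = 1 := fun ω => by
    simp [hf, Complex.norm_exp_ofReal_mul_I]
  have hfi : Integrable f P := by
    refine Integrable.mono' (integrable_const 1) hfm ?_
    filter_upwards with ω
    rw [hfnorm ω]
  have hyC : Integrable (fun ω => (y ω : ℂ)) P := hyint.ofReal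
  have hy2C : Integrable (fun ω => (y ω : ℂ) ^ 2) P := by
    have : (fun ω => (y ω : ℂ) ^ 2) = fun ω => ((y ω ^ 2 : ℝ) : ℂ) := by
      funext ω; push_cast; ring
    rw [this]; exact hy2int.ofReal
  set R : Ω → ℂ := fun ω => f ω - 1 - (y ω : ℂ) * I + (y ω : ℂ) ^ 2 / 2 with hR
  have hRint : Integrable R P :=
    ((hfi.sub (integrable_const 1)).sub (hyC.mul_const I)).add (hy2C.div_const 2)
  have hGint : Integrable (fun ω => 1 + (y ω : ℂ) * I - (y ω : ℂ) ^ 2 / 2) P :=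
    ((integrable_const 1).add (hyC.mul_const I)).sub (hy2C.div_const 2)
  have hsplit : ∫ ω, f ω ∂P
      = (∫ ω, R ω ∂P) + ∫ ω, (1 + (y ω : ℂ) * I - (y ω : ℂ) ^ 2 / 2) ∂P := by
    rw [← integral_add hRint hGint]
    congr 1; funext ω; simp only [hR]; ring
  have hG : ∫ ω, (1 + (y ω : ℂ) * I - (y ω : ℂ) ^ 2 / 2) ∂P
      = 1 - ((t ^ 2 * μ2 : ℝ) : ℂ) / 2 := by
    rw [integral_sub (f := fun ω => 1 + (y ω : ℂ) * I) (g := fun ω => (y ω : ℂ) ^ 2 / 2)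
        ((integrable_const 1).add (hyC.mul_const I)) (hy2C.div_const 2),
      integral_add (f := fun _ => (1:ℂ)) (g := fun ω => (y ω : ℂ) * I)
        (integrable_const 1) (hyC.mul_const I), integral_const,
      integral_mul_const, integral_div]
    have h1 : ∫ ω, (y ω : ℂ) ∂P = 0 := by
      have e : ∫ ω, (y ω : ℂ) ∂P = ((∫ ω, y ω ∂P : ℝ) : ℂ) := integral_ofReal (𝕜 := ℂ)
      rw [e, hy0]; simp
    have h2 : ∫ ω, (y ω : ℂ) ^ 2 ∂P = ((t ^ 2 * μ2 : ℝ) : ℂ) := by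
      have : (fun ω => (y ω : ℂ) ^ 2) = fun ω => ((y ω ^ 2 : ℝ) : ℂ) := by
        funext ω; push_cast; ring
      rw [this]
      have e : ∫ ω, ((y ω ^ 2 : ℝ) : ℂ) ∂P = ((∫ ω, y ω ^ 2 ∂P : ℝ) : ℂ) :=
        integral_ofReal (𝕜 := ℂ)
      rw [e, hy2]
    rw [h1, h2]
    simp
  have hRbound : ‖∫ ω, R ω ∂P‖ ≤ |t| ^ 3 * μ3 / 6 := by
    have := norm_integral_le_of_norm_le (μ := P) (f := R)
      (g := fun ω => |y ω| ^ 3 / 6) (hy3int.div_const 6)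
      (Filter.Eventually.of_forall fun ω => taylor (y ω))
    rwa [integral_div, hy3] at this
  have habs1 : ‖∫ ω, f ω ∂P‖ ≤ 1 := by
    have := norm_integral_le_of_norm_le (μ := P) (f := f) (g := fun _ => (1:ℝ))
      (integrable_const 1) (Filter.Eventually.of_forall fun ω => le_of_eq (hfnorm ω))
    simpa using this
  set a : ℝ := t ^ 2 * μ2 / 2 with ha
  set b : ℝ := |t| ^ 3 * μ3 / 6 with hb
  have ha0 : 0 ≤ a := by positivity
  have hb0 : 0 ≤ b := by positivity
  have hmain : ‖∫ ω, f ω ∂P‖ ≤ |1 - a| + b := by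
    rw [hsplit, hG]
    calc ‖(∫ ω, R ω ∂P) + (1 - ((t ^ 2 * μ2 : ℝ) : ℂ) / 2)‖
        ≤ ‖∫ ω, R ω ∂P‖ + ‖1 - ((t ^ 2 * μ2 : ℝ) : ℂ) / 2‖ :=
          norm_add_le _ _
      _ ≤ b + |1 - a| := by
          refine add_le_add ?_ (le_of_eq ?_)
          · exact hRbound
          · have : (1 - ((t ^ 2 * μ2 : ℝ) : ℂ) / 2) = (((1 - a : ℝ)) : ℂ) := by
              rw [ha]; push_cast; ring
            rw [this, Complex.norm_real, Real.norm_eq_abs]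
      _ = |1 - a| + b := by ring
  -- Lyapunov consequence
  have hLy : μ2 ^ 3 ≤ μ3 ^ 2 := lyap P X hXmeas.aestronglyMeasurable hX3
  have h6 : (|t| ^ 3) ^ 2 = (t ^ 2) ^ 3 := by
    rw [← _root_.abs_pow t 3, _root_.sq_abs]
    ring
  have hK : 8 * a ^ 3 ≤ 36 * b ^ 2 := by
    have ht6 : (0:ℝ) ≤ (t ^ 2) ^ 3 := by positivity
    have := mul_le_mul_of_nonneg_right hLy ht6
    have hb2 : 36 * b ^ 2 = μ3 ^ 2 * (|t| ^ 3) ^ 2 := by rw [hb]; ring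
    have ha3 : 8 * a ^ 3 = μ2 ^ 3 * (t ^ 2) ^ 3 := by rw [ha]; ring
    rw [hb2, ha3, h6]
    calc μ2 ^ 3 * (t ^ 2) ^ 3 ≤ μ3 ^ 2 * (t ^ 2) ^ 3 := this
      _ = μ3 ^ 2 * (t ^ 2) ^ 3 := rfl
  have hexp : -(1/2) * μ2 * t ^ 2 + (1/3) * μ3 * |t| ^ 3 = -a + 2 * b := by
    rw [ha, hb]; ring
  rw [hexp]
  rcases le_or_gt a (9/8) with hc | hc
  · rcases le_or_gt a 1 with h1a | h1a
    · have h1 : |1 - a| = 1 - a := _root_.abs_of_nonneg (by linarith)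
      have : ‖∫ ω, f ω ∂P‖ ≤ 1 + (-a + 2 * b) := by
        rw [h1] at hmain; linarith
      refine this.trans ?_
      have := Real.add_one_le_exp (-a + 2 * b)
      linarith
    · have h1 : |1 - a| = a - 1 := by rw [abs_sub_comm]; exact _root_.abs_of_nonneg (by linarith)
      have hb14 : 1/4 ≤ b := by nlinarith [sq_nonneg (b - 1/4), sq_nonneg (b + 1/4), sq_nonneg a]
      have : ‖∫ ω, f ω ∂P‖ ≤ 1 + (-a + 2 * b) := by
        rw [h1] at hmain; linarith
      refine this.trans ?_
      have := Real.add_one_le_exp (-a + 2 * b)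
      linarith
  · have hab : a ≤ 2 * b := by
      have hsq : a ^ 2 ≤ (2 * b) ^ 2 := by nlinarith [mul_nonneg (sq_nonneg a) (by linarith : (0:ℝ) ≤ 8 * a - 9)]
      calc a = Real.sqrt (a ^ 2) := (Real.sqrt_sq ha0).symm
        _ ≤ Real.sqrt ((2 * b) ^ 2) := Real.sqrt_le_sqrt hsq
        _ = 2 * b := Real.sqrt_sq (by linarith)
    refine habs1.trans ?_
    rw [← Real.exp_zero]
    exact Real.exp_le_exp.mpr (by linarith)


/-- For a centered random variable `ν₀ = ν − E[ν]` with `μ₂ = E[ν₀²]` and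
`μ₃ = E|ν₀|³` finite, the characteristic function satisfies
`|φ_{ν₀}(t)| ≤ exp(−½ μ₂ t² + ⅓ μ₃ |t|³)` for all `t ∈ ℝ`. -/
theorem char_fun_centered_bound
    {Ω : Type*} [MeasurableSpace Ω] (P : Measure Ω) [IsProbabilityMeasure P]
    (ν : Ω → ℝ) (hmeas : Measurable ν)
    (h1 : Integrable ν P)
    (h2 : Integrable (fun ω => (ν ω)^2) P)
    (h3 : Integrable (fun ω => |ν ω|^3) P) :
    ∀ t : ℝ,
      ‖∫ ω, Complex.exp (t * ((ν ω : ℂ) - ((∫ ω', ν ω' ∂P : ℝ) : ℂ)) * Complex.I) ∂P‖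
        ≤ Real.exp (-(1/2) * (∫ ω, (ν ω - ∫ ω', ν ω' ∂P)^2 ∂P) * t^2
            + (1/3) * (∫ ω, |ν ω - ∫ ω', ν ω' ∂P|^3 ∂P) * |t|^3) := by
  intro t
  set m : ℝ := ∫ ω', ν ω' ∂P with hm
  have hXmeas : Measurable (fun ω => ν ω - m) := hmeas.sub measurable_const
  have hX1 : Integrable (fun ω => ν ω - m) P := h1.sub (integrable_const m)
  have hX2 : Integrable (fun ω => (ν ω - m) ^ 2) P := by
    have e : (fun ω => (ν ω - m) ^ 2) = fun ω => (ν ω ^ 2 - 2 * m * ν ω) + m ^ 2 := by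
      funext ω; ring
    rw [e]
    exact (h2.sub (h1.const_mul (2 * m))).add (integrable_const _)
  have hX3 : Integrable (fun ω => |ν ω - m| ^ 3) P := by
    refine Integrable.mono' ((h3.add (integrable_const (|m| ^ 3))).const_mul 4)
      ((hmeas.sub measurable_const).abs.pow_const 3).aestronglyMeasurable ?_
    filter_upwards with ω
    rw [Real.norm_eq_abs, _root_.abs_of_nonneg (by positivity)]
    simp only [Pi.add_apply]
    have h' : |ν ω - m| ≤ |ν ω| + |m| := abs_sub _ _
    have hcube : |ν ω - m| ^ 3 ≤ (|ν ω| + |m|) ^ 3 := pow_le_pow_left₀ (abs_nonneg _) h' 3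
    nlinarith [hcube, mul_nonneg (sq_nonneg (|ν ω| - |m|))
      (add_nonneg (abs_nonneg (ν ω)) (abs_nonneg m))]
  have hX0 : ∫ ω, (ν ω - m) ∂P = 0 := by
    rw [integral_sub h1 (integrable_const m), integral_const, probReal_univ]
    simp [hm]
  have key := main_aux P (fun ω => ν ω - m) hXmeas hX1 hX2 hX3 hX0 t
  have e1 : (∫ ω, Complex.exp (↑t * ((ν ω : ℂ) - (m : ℂ)) * I) ∂P)
      = ∫ ω, Complex.exp ((t * (ν ω - m) : ℝ) * I) ∂P := by
    congr 1; funext ω; congr 1; push_cast; ring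
  rw [e1]
  exact key
end

section
/- For α > 0, δ* > 0, and λ = (λ₁,λ₂) with η α ≤ |λ₁| ≤ π for a fixed η > 0, the sum J(λ) := ∑_{x₁≥0} e^{−α δ*(x₁+1)} (1 − cos(λ₁x₁ + λ₂)) satisfies J(λ) e^{α δ*} ≥ 1/(1 − e^{−αδ*}) − 1/|1 − e^{−αδ* + iλ₁}|, and consequently J(λ) ≥ C(η)/α for some constant C(η) > 0 as α → 0, uniformly in such λ. -/
open Real

private lemma key_sum_lb (t lam₁ lam₂ : ℝ) (ht : 0 < t) :
    1 / (1 - Real.exp (-t)) - 1 / ‖(1 - Complex.exp (-t + lam₁ * Complex.I))‖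
      ≤ ∑' x : ℕ, Real.exp (-t) ^ x * (1 - Real.cos (lam₁ * x + lam₂)) := by
  set q : ℝ := Real.exp (-t) with hqdef
  have hq0 : 0 < q := Real.exp_pos _
  have hq1 : q < 1 := Real.exp_lt_one_iff.mpr (by linarith)
  set z : ℂ := (q : ℂ) * Complex.exp (lam₁ * Complex.I) with hzdef
  have hznorm : ‖z‖ = q := by
    rw [hzdef, norm_mul, Complex.norm_exp,
      Complex.norm_real, Real.norm_eq_abs, abs_of_pos hq0]
    simp
  have hz1 : ‖z‖ < 1 := by rw [hznorm]; exact hq1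
  have hgeom : Summable (fun x : ℕ => z ^ x) := summable_geometric_of_norm_lt_one hz1
  have hc : Summable (fun x : ℕ => Complex.exp (lam₂ * Complex.I) * z ^ x) := hgeom.mul_left _
  have hterm : ∀ x : ℕ, (Complex.exp (lam₂ * Complex.I) * z ^ x).re
      = q ^ x * Real.cos (lam₁ * x + lam₂) := by
    intro x
    have : Complex.exp (lam₂ * Complex.I) * z ^ x
        = (q : ℂ) ^ x * Complex.exp (((lam₁ * x + lam₂ : ℝ) : ℂ) * Complex.I) := by
      rw [hzdef, mul_pow, ← Complex.exp_nat_mul, mul_left_comm, ← Complex.exp_add]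
      congr 2
      push_cast
      ring
    rw [this]
    rw [← Complex.ofReal_pow, Complex.re_ofReal_mul, Complex.exp_ofReal_mul_I_re]
  have h2 : Summable (fun x : ℕ => q ^ x * Real.cos (lam₁ * x + lam₂)) := by
    have := (Complex.reCLM.summable hc)
    simpa [hterm] using this
  have h1 : Summable (fun x : ℕ => q ^ x) := summable_geometric_of_lt_one hq0.le hq1
  have hS : (∑' x : ℕ, q ^ x * Real.cos (lam₁ * x + lam₂))
      = (Complex.exp (lam₂ * Complex.I) * (1 - z)⁻¹).re := by
    rw [← tsum_geometric_of_norm_lt_one hz1, ← tsum_mul_left, Complex.re_tsum hc]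
    exact (tsum_congr hterm).symm
  have habs : ‖(1 - Complex.exp (-t + lam₁ * Complex.I))‖ = ‖(1 - z)‖ := by
    congr 2
    rw [hzdef, Complex.exp_add]
    congr 1
    rw [hqdef, Complex.ofReal_exp]
    push_cast; ring_nf
  have hzne : (1 : ℂ) - z ≠ 0 := by
    intro h
    rw [sub_eq_zero] at h
    rw [← h] at hz1
    simp at hz1
  have habspos : 0 < ‖(1 - z)‖ := norm_pos_iff.mpr hzne
  have hSbound : (∑' x : ℕ, q ^ x * Real.cos (lam₁ * x + lam₂)) ≤ 1 / ‖(1 - z)‖ := by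
    rw [hS]
    refine (Complex.re_le_norm _).trans ?_
    rw [norm_mul, norm_inv, Complex.norm_exp]
    simp [one_div]
  have hfin : ∑' x : ℕ, q ^ x * (1 - Real.cos (lam₁ * x + lam₂))
      = (1 - q)⁻¹ - ∑' x : ℕ, q ^ x * Real.cos (lam₁ * x + lam₂) := by
    rw [← tsum_geometric_of_lt_one hq0.le hq1, ← Summable.tsum_sub h1 h2]
    exact tsum_congr fun x => by ring
  rw [hfin, habs, one_div (1 - q)]
  linarith

private lemma abs_one_sub_exp_sq (t lam₁ : ℝ) :
    ‖(1 - Complex.exp (-t + lam₁ * Complex.I))‖ ^ 2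
      = (1 - Real.exp (-t)) ^ 2 + 2 * Real.exp (-t) * (1 - Real.cos lam₁) := by
  have hre : (1 - Complex.exp (-(t : ℂ) + lam₁ * Complex.I)).re
      = 1 - Real.exp (-t) * Real.cos lam₁ := by
    simp [Complex.exp_re]
  have him : (1 - Complex.exp (-(t : ℂ) + lam₁ * Complex.I)).im
      = -(Real.exp (-t) * Real.sin lam₁) := by
    simp [Complex.exp_im]
  rw [Complex.sq_norm, Complex.normSq_apply, hre, him]
  have hpyth := Real.sin_sq_add_cos_sq lam₁
  linear_combination Real.exp (-t) ^ 2 * hpyth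

private lemma tsum_stmt_eq (t lam₁ lam₂ : ℝ) :
    (∑' x : ℕ, Real.exp (-t * ((x : ℝ) + 1)) * (1 - Real.cos (lam₁ * x + lam₂)))
      = Real.exp (-t) * ∑' x : ℕ, Real.exp (-t) ^ x * (1 - Real.cos (lam₁ * x + lam₂)) := by
  rw [← tsum_mul_left]
  refine tsum_congr fun x => ?_
  rw [show -t * ((x : ℝ) + 1) = (x : ℝ) * (-t) + (-t) by ring, Real.exp_add,
    Real.exp_nat_mul]
  ring

/-- For `α > 0`, `δ* > 0` and `λ = (λ₁,λ₂)` with `ηα ≤ |λ₁| ≤ π` (`η > 0` fixed),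
the sum `J(λ) = ∑_{x₁≥0} e^{−αδ*(x₁+1)} (1 − cos(λ₁x₁ + λ₂))` satisfies
`J(λ) e^{αδ*} ≥ 1/(1 − e^{−αδ*}) − 1/|1 − e^{−αδ* + iλ₁}|`, and consequently
`J(λ) ≥ C(η)/α` for some constant `C(η) > 0` as `α → 0`, uniformly in such `λ`. -/
theorem trigonometric_sum_lower_bound (δs η : ℝ) (hδs : 0 < δs) (hη : 0 < η) :
    (∀ α : ℝ, 0 < α → ∀ lam₁ lam₂ : ℝ, η * α ≤ |lam₁| → |lam₁| ≤ Real.pi →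
      (1 : ℝ) / (1 - Real.exp (-(α * δs)))
          - 1 / ‖(1 - Complex.exp (-(α * δs) + lam₁ * Complex.I))‖
        ≤ (∑' x : ℕ, Real.exp (-(α * δs) * ((x : ℝ) + 1)) * (1 - Real.cos (lam₁ * x + lam₂)))
            * Real.exp (α * δs)) ∧
    (∃ C : ℝ, 0 < C ∧ ∃ α₀ : ℝ, 0 < α₀ ∧
      ∀ α : ℝ, 0 < α → α < α₀ → ∀ lam₁ lam₂ : ℝ, η * α ≤ |lam₁| → |lam₁| ≤ Real.pi →
        C / α ≤ ∑' x : ℕ, Real.exp (-(α * δs) * ((x : ℝ) + 1)) * (1 - Real.cos (lam₁ * x + lam₂))) := by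
  have hπ : 0 < Real.pi := Real.pi_pos
  constructor
  · intro α hα lam₁ lam₂ _ _
    have ht : 0 < α * δs := mul_pos hα hδs
    rw [tsum_stmt_eq (α * δs) lam₁ lam₂, mul_comm (Real.exp (-(α * δs))), mul_assoc,
      ← Real.exp_add, neg_add_cancel, Real.exp_zero, mul_one]
    have h := key_sum_lb (α * δs) lam₁ lam₂ ht
    simpa only [Complex.ofReal_mul] using h
  · -- constants
    set K : ℝ := 2 * η ^ 2 / (Real.pi ^ 2 * δs ^ 2) with hKdef
    have hK : 0 < K := by positivity
    set s : ℝ := Real.sqrt (1 + K) with hsdef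
    have hs1 : 1 < s := by
      rw [hsdef]
      have h := Real.sqrt_lt_sqrt (by norm_num : (0:ℝ) ≤ 1) (by linarith : (1:ℝ) < 1 + K)
      simpa using h
    have hs0 : 0 < s := by linarith
    set c₀ : ℝ := 1 - 1 / s with hc₀def
    have hc₀ : 0 < c₀ := by
      have : 1 / s < 1 := by
        rw [div_lt_one hs0]; exact hs1
      simpa [hc₀def] using sub_pos.mpr this
    refine ⟨c₀ / (2 * δs), by positivity, Real.log 2 / δs, by positivity, ?_⟩
    intro α hα hα₀ lam₁ lam₂ hlam₁ hlam₂
    have ht : 0 < α * δs := mul_pos hα hδs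
    set q : ℝ := Real.exp (-(α * δs)) with hqdef
    have hq0 : 0 < q := Real.exp_pos _
    have hq1 : q < 1 := Real.exp_lt_one_iff.mpr (by linarith)
    have hq2 : 1 / 2 ≤ q := by
      have h1 : α * δs < Real.log 2 := (lt_div_iff₀ hδs).mp hα₀
      have := Real.exp_lt_exp.mpr (neg_lt_neg h1)
      rw [Real.exp_neg, Real.exp_log (by norm_num : (0:ℝ) < 2)] at this
      rw [hqdef]
      linarith [this]
    have h1q : 1 - q ≤ α * δs := by
      have := Real.add_one_le_exp (-(α * δs))
      rw [← hqdef] at this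
      linarith
    -- Jordan bound
    have hJ : 2 / Real.pi ^ 2 * lam₁ ^ 2 ≤ 1 - Real.cos lam₁ := by
      have := Real.cos_le_one_sub_mul_cos_sq hlam₂
      linarith
    -- lower bound on |1-E|
    have habs2 : (1 + K) * (1 - q) ^ 2
        ≤ ‖(1 - Complex.exp (-(α * δs) + lam₁ * Complex.I))‖ ^ 2 := by
      have h := abs_one_sub_exp_sq (α * δs) lam₁
      simp only [Complex.ofReal_mul] at h
      rw [h, ← hqdef]
      have hllam : η ^ 2 * α ^ 2 ≤ lam₁ ^ 2 := by
        have h' := pow_le_pow_left₀ (by positivity : (0:ℝ) ≤ η * α) hlam₁ 2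
        rw [sq_abs] at h'
        linarith [h']
      have hKb : K * (1 - q) ^ 2 ≤ 2 * q * (1 - Real.cos lam₁) := by
        have e1 : K * (α * δs) ^ 2 = 2 / Real.pi ^ 2 * (η ^ 2 * α ^ 2) := by
          rw [hKdef]; field_simp
        have e2 : K * (1 - q) ^ 2 ≤ K * (α * δs) ^ 2 := by
          apply mul_le_mul_of_nonneg_left _ hK.le
          have h0 : 0 ≤ 1 - q := by linarith
          nlinarith
        have e3 : 2 / Real.pi ^ 2 * (η ^ 2 * α ^ 2) ≤ 2 / Real.pi ^ 2 * lam₁ ^ 2 := by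
          apply mul_le_mul_of_nonneg_left hllam (by positivity)
        have e4 : 1 - Real.cos lam₁ ≤ 2 * q * (1 - Real.cos lam₁) := by
          have hcos : 0 ≤ 1 - Real.cos lam₁ := by
            linarith [Real.cos_le_one lam₁]
          nlinarith
        linarith
      have expand : (1 + K) * (1 - q) ^ 2 = (1 - q) ^ 2 + K * (1 - q) ^ 2 := by ring
      linarith [hKb, expand]
    set A : ℝ := ‖(1 - Complex.exp (-(α * δs) + lam₁ * Complex.I))‖ with hAdef
    have hA0 : 0 ≤ A := norm_nonneg _
    have hAlb : s * (1 - q) ≤ A := by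
      have hnn : 0 ≤ s * (1 - q) := mul_nonneg hs0.le (by linarith)
      have hsq : (s * (1 - q)) ^ 2 = (1 + K) * (1 - q) ^ 2 := by
        rw [mul_pow, hsdef, Real.sq_sqrt (by linarith : (0:ℝ) ≤ 1 + K)]
      have hsq2 : (s * (1 - q)) ^ 2 ≤ A ^ 2 := by rw [hsq]; exact habs2
      calc s * (1 - q) = Real.sqrt ((s * (1 - q)) ^ 2) := (Real.sqrt_sq hnn).symm
        _ ≤ Real.sqrt (A ^ 2) := Real.sqrt_le_sqrt hsq2
        _ = A := Real.sqrt_sq hA0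
    have hApos : 0 < A := lt_of_lt_of_le (mul_pos hs0 (by linarith)) hAlb
    have hinv : 1 / A ≤ 1 / (s * (1 - q)) := by
      apply one_div_le_one_div_of_le (mul_pos hs0 (by linarith)) hAlb
    -- key lower bound
    have hkey := key_sum_lb (α * δs) lam₁ lam₂ ht
    simp only [Complex.ofReal_mul] at hkey
    set T : ℝ := ∑' x : ℕ, q ^ x * (1 - Real.cos (lam₁ * x + lam₂)) with hTdef
    have hT : c₀ / (α * δs) ≤ T := by
      have h1 : 1 / (1 - q) - 1 / (s * (1 - q)) ≤ T := by
        calc 1 / (1 - q) - 1 / (s * (1 - q)) ≤ 1 / (1 - q) - 1 / A := by linarith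
        _ ≤ T := hkey
      have h2 : 1 / (1 - q) - 1 / (s * (1 - q)) = c₀ / (1 - q) := by
        rw [hc₀def]
        have h1q0 : (1 : ℝ) - q ≠ 0 := by linarith
        field_simp
      have h3 : c₀ / (α * δs) ≤ c₀ / (1 - q) := by
        apply div_le_div_of_nonneg_left hc₀.le (by linarith) h1q
      linarith
    rw [tsum_stmt_eq (α * δs) lam₁ lam₂, ← hqdef, ← hTdef]
    have hTpos : 0 < T := lt_of_lt_of_le (by positivity) hT
    have hfinal : c₀ / (2 * δs) / α = (1 / 2) * (c₀ / (α * δs)) := by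
      rw [div_div, show (1:ℝ) / 2 * (c₀ / (α * δs)) = c₀ / (2 * (α * δs)) by ring]
      congr 1
      ring
    rw [hfinal]
    calc (1 / 2) * (c₀ / (α * δs)) ≤ (1 / 2) * T := by
          apply mul_le_mul_of_nonneg_left hT (by norm_num)
      _ ≤ q * T := by
          have := mul_le_mul_of_nonneg_right hq2 hTpos.le
          linarith
end
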